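/- arXiv:1002.1256 — 3 statements merged into one kernel-verified Lean document; each statement's English description precedes it below -/
import Mathlib

section
/- Let G be a triangle-free graph (a flag 1-dimensional simplicial complex) on exactly 2(m+1) vertices such that for every vertex v, removing any set of fewer than m vertices leaves a connected graph in which the neighborhood of every remaining vertex is nonempty, and every vertex of G has degree at least m+1. Then G is isomorphic to the complete bipartite graph K_{m+1, m+1}. -/
/-!
Pick adjacent vertices `u`, `v`. Triangle-freeness makes their neighbourhoods disjoint, and
together they have at least `2(m+1) = |V|` elements, so `N(v)` is the complement of `N(u)`.
Applying the same argument to every edge shows that every vertex of `N(u)` is adjacent to exactly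
the complement of `N(u)` and vice versa, i.e. `G` is complete bipartite with parts `N(u)` and its
complement, each of size `m+1`.
-/

open Finset SimpleGraph

namespace SimpleGraph

variable {V : Type*} {G : SimpleGraph V}

theorem CliqueFree.disjoint_neighborSet_of_adj (htf : G.CliqueFree 3) {u v : V}
    (huv : G.Adj u v) : Disjoint (G.neighborSet u) (G.neighborSet v) := by
  classical
  refine Set.disjoint_left.mpr fun w hu hv ↦ htf {u, v, w} ?_
  exact is3Clique_triple_iff.mpr ⟨huv, hu, hv⟩

def isoCompleteBipartiteGraphOfAdjIff (p : V → Prop) [DecidablePred p]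
    (h : ∀ x y, G.Adj x y ↔ (p x ↔ ¬ p y)) :
    G ≃g completeBipartiteGraph {x // p x} {x // ¬ p x} :=
  RelIso.symm
    { toEquiv := Equiv.sumCompl p
      map_rel_iff' := by rintro (⟨a, ha⟩ | ⟨a, ha⟩) (⟨b, hb⟩ | ⟨b, hb⟩) <;> simp [h, ha, hb] }

theorem exists_adj_of_card_eq_two_mul [Fintype V] [DecidableRel G.Adj] {n : ℕ}
    (hcard : Fintype.card V = 2 * n) (hdeg : ∀ v, n ≤ G.degree v) (u : V) : ∃ v, G.Adj u v := by
  have := Fintype.card_pos_iff.mpr ⟨u⟩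
  have := hdeg u
  exact (G.degree_pos_iff_exists_adj u).mp (by omega)

variable [Fintype V] [DecidableEq V] [DecidableRel G.Adj] {n : ℕ}

theorem CliqueFree.neighborFinset_eq_compl_of_adj (htf : G.CliqueFree 3) {u v : V}
    (huv : G.Adj u v) (hcard : Fintype.card V ≤ G.degree u + G.degree v) :
    G.neighborFinset v = (G.neighborFinset u)ᶜ := by
  have hdisj : Disjoint (G.neighborFinset u) (G.neighborFinset v) := by
    simpa [← Finset.disjoint_coe] using htf.disjoint_neighborSet_of_adj huv
  refine eq_of_subset_of_card_le (subset_compl_iff_disjoint_left.mpr hdisj) ?_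
  rw [card_compl, card_neighborFinset_eq_degree, card_neighborFinset_eq_degree]
  omega

theorem CliqueFree.neighborFinset_eq_compl_of_adj_of_card_eq_two_mul (htf : G.CliqueFree 3)
    (hcard : Fintype.card V = 2 * n) (hdeg : ∀ v, n ≤ G.degree v) {u v : V} (huv : G.Adj u v) :
    G.neighborFinset v = (G.neighborFinset u)ᶜ :=
  htf.neighborFinset_eq_compl_of_adj huv (by have := hdeg u; have := hdeg v; omega)

theorem CliqueFree.degree_eq_of_card_eq_two_mul (htf : G.CliqueFree 3)
    (hcard : Fintype.card V = 2 * n) (hdeg : ∀ v, n ≤ G.degree v) (u : V) : G.degree u = n := by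
  obtain ⟨v, huv⟩ := exists_adj_of_card_eq_two_mul hcard hdeg u
  have hv : G.degree v = Fintype.card V - G.degree u := by
    rw [← card_neighborFinset_eq_degree,
      htf.neighborFinset_eq_compl_of_adj_of_card_eq_two_mul hcard hdeg huv, card_compl,
      card_neighborFinset_eq_degree]
  have := G.degree_lt_card_verts u
  have := hdeg u
  have := hdeg v
  omega

theorem CliqueFree.adj_iff_of_card_eq_two_mul (htf : G.CliqueFree 3)
    (hcard : Fintype.card V = 2 * n) (hdeg : ∀ v, n ≤ G.degree v) (u x y : V) :
    G.Adj x y ↔ (x ∈ G.neighborFinset u ↔ y ∉ G.neighborFinset u) := by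
  have hN {a b : V} (hab : G.Adj a b) :=
    htf.neighborFinset_eq_compl_of_adj_of_card_eq_two_mul hcard hdeg hab
  rw [← mem_neighborFinset]
  by_cases hx : x ∈ G.neighborFinset u
  · rw [hN ((mem_neighborFinset _ _ _).mp hx), mem_compl]
    tauto
  · obtain ⟨v, huv⟩ := exists_adj_of_card_eq_two_mul hcard hdeg u
    have hvx : G.Adj v x := by rwa [← mem_neighborFinset, hN huv, mem_compl]
    rw [hN hvx, hN huv, compl_compl]
    tauto

end SimpleGraph

theorem stmt4_general {V : Type*} [Fintype V] (m : ℕ) (G : SimpleGraph V)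
    (hcard : Fintype.card V = 2 * (m + 1))
    (htf : G.CliqueFree 3)
    (hdeg : ∀ v : V, m + 1 ≤ (G.neighborSet v).ncard) :
    Nonempty (G ≃g completeBipartiteGraph (Fin (m + 1)) (Fin (m + 1))) := by
  classical
  have hdeg' : ∀ v, m + 1 ≤ G.degree v := fun v ↦ by
    simpa [← card_neighborFinset_eq_degree, ← Set.ncard_coe_finset] using hdeg v
  obtain ⟨u⟩ : Nonempty V := Fintype.card_pos_iff.mp (by omega)
  have hu : Fintype.card {x // x ∈ G.neighborFinset u} = m + 1 := by
    rw [Fintype.card_coe, card_neighborFinset_eq_degree,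
      htf.degree_eq_of_card_eq_two_mul hcard hdeg' u]
  have hu' : Fintype.card {x // x ∉ G.neighborFinset u} = m + 1 := by
    rw [Fintype.card_subtype_compl, hu, hcard]
    omega
  exact ⟨(isoCompleteBipartiteGraphOfAdjIff _ (htf.adj_iff_of_card_eq_two_mul hcard hdeg' u)).trans
    (completeBipartiteGraphCongr (Fintype.equivFinOfCardEq hu) (Fintype.equivFinOfCardEq hu'))⟩

/-- a triangle-free graph on exactly `2(m+1)` vertices such that
removing any set of fewer than `m` vertices leaves a connected graph in which
every remaining vertex has a remaining neighbor, and in which every vertex has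
degree at least `m+1`, is isomorphic to the complete bipartite graph
`K_{m+1,m+1}`. -/
theorem stmt4 {V : Type*} [Fintype V] (m : ℕ) (G : SimpleGraph V)
    (hcard : Fintype.card V = 2 * (m + 1))
    (htf : G.CliqueFree 3)
    (hconn : ∀ A : Finset V, A.card < m →
      (G.induce ((↑A : Set V)ᶜ)).Connected ∧
      ∀ v : V, v ∉ A → ∃ w : V, w ∉ A ∧ G.Adj v w)
    (hdeg : ∀ v : V, m + 1 ≤ (G.neighborSet v).ncard) :
    Nonempty (G ≃g completeBipartiteGraph (Fin (m + 1)) (Fin (m + 1))) :=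
  stmt4_general m G hcard htf hdeg
end

section
/- Let Δ be a simplicial complex of dimension d-1 with d ≥ 4 whose h-numbers satisfy: (i) Swartz's identity Σ_{v ∈ V(Δ)} h_{j-1}(lk_Δ v) = j·h_j(Δ) + (d-j+1)·h_{j-1}(Δ) for all j, and (ii) for every vertex v, 2·h_2(lk_Δ v) ≥ (d-2)·h_1(lk_Δ v). Then 2·(3h_3(Δ) + (d-2)h_2(Δ)) ≥ (d-2)·(2h_2(Δ) + (d-1)h_1(Δ)), and consequently if additionally 2h_2(Δ) ≥ (d-1)h_1(Δ), then d·h_3(Δ) ≥ C(d,3)·h_1(Δ). -/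
open Finset

/-- `fNum K i` is the number of faces of `K` of cardinality `i`, i.e. `f_{i-1}(K)`. -/
def fNum {V : Type*} [DecidableEq V] (K : Finset (Finset V)) (i : ℕ) : ℕ :=
  (K.filter fun σ => σ.card = i).card

/-- The h-numbers of a complex of dimension `d-1`:
`h_j = ∑_{i=0}^j (-1)^{j-i} C(d-i, j-i) f_{i-1}`. -/
def hNum {V : Type*} [DecidableEq V] (d : ℕ) (K : Finset (Finset V)) (j : ℕ) : ℤ :=
  ∑ i ∈ range (j + 1), (-1 : ℤ) ^ (j - i) * ((d - i).choose (j - i) : ℤ) * (fNum K i : ℤ)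

/-- The link of a vertex: `lk_K(v) = {σ ∈ K : v ∉ σ, σ ∪ {v} ∈ K}`. -/
def lkC {V : Type*} [DecidableEq V] (K : Finset (Finset V)) (v : V) :
    Finset (Finset V) :=
  K.filter fun σ => v ∉ σ ∧ insert v σ ∈ K

/-- The vertex set of a complex. -/
def vertsC {V : Type*} [DecidableEq V] (K : Finset (Finset V)) : Finset V :=
  K.sup id

lemma choose3 (d : ℕ) (hd : 4 ≤ d) : ((d.choose 3 : ℤ)) * 6 = d * (d - 1) * (d - 2) := by
  have h := Nat.descFactorial_eq_factorial_mul_choose d 3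
  have h2 : d.descFactorial 3 = d * (d - 1) * (d - 2) := by
    simp [Nat.descFactorial_succ, Nat.descFactorial_zero]; ring
  have : 6 * d.choose 3 = d * (d - 1) * (d - 2) := by
    rw [← h2, h]; norm_num [Nat.factorial]
  have := congrArg (Nat.cast : ℕ → ℤ) this
  push_cast [Nat.cast_sub (by omega : 1 ≤ d), Nat.cast_sub (by omega : 2 ≤ d)] at this
  linarith

/-- if the h-numbers of a `(d-1)`-dimensional complex (`d ≥ 4`)
satisfy Swartz's identity
`∑_v h_{j-1}(lk v) = j h_j + (d-j+1) h_{j-1}` and every vertex link satisfies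
`2 h_2(lk v) ≥ (d-2) h_1(lk v)`, then
`2(3h_3 + (d-2)h_2) ≥ (d-2)(2h_2 + (d-1)h_1)`; consequently, if moreover
`2h_2 ≥ (d-1)h_1`, then `d·h_3 ≥ C(d,3)·h_1`. -/
theorem stmt6 {V : Type*} [DecidableEq V] (d : ℕ) (hd : 4 ≤ d)
    (Δ : Finset (Finset V))
    (hdim : (∀ σ ∈ Δ, σ.card ≤ d) ∧ ∃ σ ∈ Δ, σ.card = d)
    (hswartz : ∀ j : ℕ, 1 ≤ j → j ≤ d →
      ∑ v ∈ vertsC Δ, hNum (d - 1) (lkC Δ v) (j - 1) =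
        (j : ℤ) * hNum d Δ j + ((d : ℤ) - j + 1) * hNum d Δ (j - 1))
    (hlk : ∀ v ∈ vertsC Δ,
      2 * hNum (d - 1) (lkC Δ v) 2 ≥ ((d : ℤ) - 2) * hNum (d - 1) (lkC Δ v) 1) :
    2 * (3 * hNum d Δ 3 + ((d : ℤ) - 2) * hNum d Δ 2) ≥
      ((d : ℤ) - 2) * (2 * hNum d Δ 2 + ((d : ℤ) - 1) * hNum d Δ 1) ∧
    (2 * hNum d Δ 2 ≥ ((d : ℤ) - 1) * hNum d Δ 1 →
      (d : ℤ) * hNum d Δ 3 ≥ (d.choose 3 : ℤ) * hNum d Δ 1) := by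
  have h3 := hswartz 3 (by omega) (by omega)
  have h2 := hswartz 2 (by omega) (by omega)
  norm_num at h3 h2
  have hsum : ∑ v ∈ vertsC Δ, 2 * hNum (d - 1) (lkC Δ v) 2 ≥
      ∑ v ∈ vertsC Δ, ((d : ℤ) - 2) * hNum (d - 1) (lkC Δ v) 1 :=
    Finset.sum_le_sum (fun v hv => hlk v hv)
  rw [← Finset.mul_sum, ← Finset.mul_sum, h3, h2] at hsum
  have hfirst : 2 * (3 * hNum d Δ 3 + ((d : ℤ) - 2) * hNum d Δ 2) ≥
      ((d : ℤ) - 2) * (2 * hNum d Δ 2 + ((d : ℤ) - 1) * hNum d Δ 1) := by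
    nlinarith [hsum]
  refine ⟨hfirst, fun _ => ?_⟩
  have hc := choose3 d hd
  have hd' : (4 : ℤ) ≤ (d : ℤ) := by exact_mod_cast hd
  have h6 : ((d : ℤ) - 1) * ((d : ℤ) - 2) * hNum d Δ 1 ≤ 6 * hNum d Δ 3 := by nlinarith [hfirst]
  have hmul := mul_le_mul_of_nonneg_left h6 (by positivity : (0 : ℤ) ≤ (d : ℤ))
  have hc' : ((d.choose 3 : ℤ)) * 6 * hNum d Δ 1 = (d : ℤ) * ((d : ℤ) - 1) * ((d : ℤ) - 2) * hNum d Δ 1 := by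
    rw [hc]
  linarith [hmul, hc']
end

section
/- Let Δ be a balanced (d-1)-dimensional simplicial complex with coloring κ: V(Δ) → [d]. Then for every i, h_i(Δ) = Σ_{S ⊆ [d], |S| = i} h_i(Δ_S), where Δ_S is the S-rank-selected subcomplex. -/
open Finset

/-- A (finite abstract) simplicial complex. -/
def IsComplex {V : Type*} [DecidableEq V] (K : Finset (Finset V)) : Prop :=
  ∅ ∈ K ∧ ∀ σ ∈ K, ∀ τ ⊆ σ, τ ∈ K

/-- The `S`-rank-selected subcomplex of a colored complex. -/
def rankSel {V : Type*} [DecidableEq V] (K : Finset (Finset V)) (κ : V → Fin d)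
    (S : Finset (Fin d)) : Finset (Finset V) :=
  K.filter fun σ => ∀ x ∈ σ, κ x ∈ S

lemma aux_count {α : Type*} [DecidableEq α] [Fintype α] {T : Finset α} {i : ℕ}
    (h : T.card ≤ i) :
    ((Finset.univ.powersetCard i).filter (fun S => T ⊆ S)).card
      = (Fintype.card α - T.card).choose (i - T.card) := by
  rw [show Fintype.card α - T.card = (Finset.univ \ T).card by
    rw [Finset.card_sdiff_of_subset (Finset.subset_univ T), Finset.card_univ]]
  rw [← Finset.card_powersetCard (i - T.card) (Finset.univ \ T)]
  apply Finset.card_bij (fun S _ => S \ T)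
  · intro S hS
    simp only [Finset.mem_filter, Finset.mem_powersetCard] at hS ⊢
    obtain ⟨⟨_, hcard⟩, hTS⟩ := hS
    exact ⟨Finset.sdiff_subset_sdiff (Finset.subset_univ S) le_rfl,
      by rw [Finset.card_sdiff_of_subset hTS, hcard]⟩
  · intro S hS S' hS' heq
    simp only [Finset.mem_filter, Finset.mem_powersetCard] at hS hS'
    have := congrArg (fun U => U ∪ T) heq
    simpa [Finset.sdiff_union_of_subset hS.2, Finset.sdiff_union_of_subset hS'.2] using this
  · intro U hU
    rw [Finset.mem_powersetCard] at hU
    obtain ⟨hUsub, hUcard⟩ := hU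
    rw [Finset.subset_sdiff] at hUsub
    refine ⟨U ∪ T, ?_, ?_⟩
    · simp only [Finset.mem_filter, Finset.mem_powersetCard]
      refine ⟨⟨Finset.subset_univ _, ?_⟩, Finset.subset_union_right⟩
      rw [Finset.card_union_of_disjoint hUsub.2, hUcard]
      omega
    · rw [Finset.union_sdiff_right, Finset.sdiff_eq_self_of_disjoint hUsub.2]

lemma key_count {V : Type*} [DecidableEq V] {d : ℕ} (Δ : Finset (Finset V)) (κ : V → Fin d)
    (hbal : ∀ σ ∈ Δ, ∀ a ∈ σ, ∀ b ∈ σ, a ≠ b → κ a ≠ κ b)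
    {i j : ℕ} (hji : j ≤ i) :
    ∑ S ∈ Finset.univ.powersetCard i, fNum (rankSel Δ κ S) j
      = (d - j).choose (i - j) * fNum Δ j := by
  simp only [fNum, rankSel, Finset.filter_filter, Finset.card_filter]
  rw [Finset.sum_comm]
  rw [Finset.mul_sum]
  refine Finset.sum_congr rfl fun σ hσ => ?_
  by_cases hc : σ.card = j
  · simp only [hc, and_true, if_true, mul_one]
    have hinj : Set.InjOn κ σ := by
      intro a ha b hb hab
      by_contra hne
      exact hbal σ hσ a ha b hb hne hab
    have hT : (σ.image κ).card = j := by
      rw [Finset.card_image_of_injOn hinj, hc]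
    have hcond : ∀ S : Finset (Fin d), (∀ x ∈ σ, κ x ∈ S) ↔ σ.image κ ⊆ S := by
      intro S
      rw [Finset.image_subset_iff]
    calc ∑ S ∈ Finset.univ.powersetCard i, (if (∀ x ∈ σ, κ x ∈ S) then 1 else 0)
        = ((Finset.univ.powersetCard i).filter (fun S => σ.image κ ⊆ S)).card := by
          rw [Finset.card_filter]
          exact Finset.sum_congr rfl fun S _ => by simp only [hcond S]
      _ = (d - j).choose (i - j) := by
          rw [aux_count (by rw [hT]; exact hji), hT, Fintype.card_fin]
  · simp [hc]

/-- Stanley's rank-selection identity: for a balanced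
`(d-1)`-dimensional complex `Δ` with proper coloring `κ : V → [d]`,
`h_i(Δ) = ∑_{S ⊆ [d], |S| = i} h_i(Δ_S)`, the h-numbers of `Δ_S` being taken
with respect to dimension `|S| - 1`. -/
theorem stmt17 {V : Type*} [DecidableEq V] (d : ℕ) (Δ : Finset (Finset V))
    (hcx : IsComplex Δ) (hdim : (∀ σ ∈ Δ, σ.card ≤ d) ∧ ∃ σ ∈ Δ, σ.card = d)
    (κ : V → Fin d)
    (hbal : ∀ σ ∈ Δ, ∀ a ∈ σ, ∀ b ∈ σ, a ≠ b → κ a ≠ κ b) :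
    ∀ i ≤ d, hNum d Δ i =
      ∑ S ∈ Finset.univ.powersetCard i, hNum i (rankSel Δ κ S) i := by
  intro i hi
  simp only [hNum]
  rw [Finset.sum_comm]
  refine Finset.sum_congr rfl fun j hj => ?_
  have hj' : j ≤ i := Nat.lt_succ_iff.mp (Finset.mem_range.mp hj)
  have hk := key_count Δ κ hbal hj'
  simp only [Nat.choose_self, Nat.cast_one, mul_one]
  rw [← Finset.mul_sum, ← Nat.cast_sum, hk]
  push_cast
  ring
end
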